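/- arXiv:1503.04068 — 2 statements merged into one kernel-verified Lean document; each statement's English description precedes it below -/
import Mathlib

section
/- Let G be a finitely generated torsion-free nilpotent group and T ⊆ G a subset such that the subgroup of G generated by T has finite index in G. If ξ, η ∈ Pol(G) satisfy ξ(1) = η(1) and ∂'_t ξ = ∂'_t η for every t ∈ T, then ξ = η. -/
/-- The left difference operator: `(∂_g ξ)(h) = ξ(g⁻¹h) - ξ(h)`. -/
def lDiff {G : Type*} [Group G] (g : G) (ξ : G → ℝ) : G → ℝ :=
  fun h => ξ (g⁻¹ * h) - ξ h

/-- The right difference operator: `(∂'_g ξ)(h) = ξ(hg) - ξ(h)`. -/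
def rDiff {G : Type*} [Group G] (g : G) (ξ : G → ℝ) : G → ℝ :=
  fun h => ξ (h * g) - ξ h

/-- A monoid is torsion-free if no element other than `1` has finite order
(the definition of `Monoid.IsTorsionFree` in the older Mathlib). -/
def Monoid.IsTorsionFree (G : Type*) [Monoid G] : Prop :=
  ∀ g : G, g ≠ 1 → ¬IsOfFinOrder g

/-- `ξ` is a polynomial map of degree at most `d`. -/
def IsPolyLe {G : Type*} [Group G] (d : ℕ) (ξ : G → ℝ) : Prop :=
  ∀ gs : List G, gs.length = d + 1 → gs.foldr lDiff ξ = 0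

/-! The difference `ξ - η` is again polynomial and is invariant under right translation by the
finite-index subgroup generated by `T`, so it takes finitely many values. A polynomial map with
finitely many values is constant: by induction on the degree each difference `∂_g` of it is
constant, so along the powers of `g⁻¹` it is an arithmetic progression with finitely many values,
whose step must be `0`. As `ξ - η` vanishes at `1`, it vanishes everywhere. -/

open Pointwise

section Group

variable {G : Type*} [Group G]

lemma lDiff_sub (g : G) (ξ η : G → ℝ) : lDiff g (ξ - η) = lDiff g ξ - lDiff g η := by
  funext h
  simp only [lDiff, Pi.sub_apply]
  ring

lemma rDiff_sub (g : G) (ξ η : G → ℝ) : rDiff g (ξ - η) = rDiff g ξ - rDiff g η := by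
  funext h
  simp only [rDiff, Pi.sub_apply]
  ring

lemma foldr_lDiff_zero (gs : List G) : gs.foldr lDiff (0 : G → ℝ) = 0 := by
  induction gs with
  | nil => rfl
  | cons g gs ih => simpa [ih] using lDiff_sub g (0 : G → ℝ) 0

lemma foldr_lDiff_sub (gs : List G) (ξ η : G → ℝ) :
    gs.foldr lDiff (ξ - η) = gs.foldr lDiff ξ - gs.foldr lDiff η := by
  induction gs with
  | nil => rfl
  | cons g gs ih => rw [List.foldr_cons, ih, lDiff_sub]; rfl

lemma IsPolyLe.mono {d e : ℕ} {ξ : G → ℝ} (hξ : IsPolyLe d ξ) (hde : d ≤ e) :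
    IsPolyLe e ξ := by
  intro gs hlen
  rw [← List.take_append_drop (e - d) gs, List.foldr_append, hξ _ (by simp; omega),
    foldr_lDiff_zero]

lemma IsPolyLe.sub {d : ℕ} {ξ η : G → ℝ} (hξ : IsPolyLe d ξ) (hη : IsPolyLe d η) :
    IsPolyLe d (ξ - η) := by
  intro gs hlen
  rw [foldr_lDiff_sub, hξ gs hlen, hη gs hlen, sub_zero]

lemma IsPolyLe.isPolyLe_lDiff {d : ℕ} {ξ : G → ℝ} (hξ : IsPolyLe (d + 1) ξ) (g : G) :
    IsPolyLe d (lDiff g ξ) := by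
  intro gs hlen
  simpa using hξ (gs ++ [g]) (by simp [hlen])

lemma finite_range_lDiff {ξ : G → ℝ} (hξ : (Set.range ξ).Finite) (g : G) :
    (Set.range (lDiff g ξ)).Finite := by
  refine (hξ.sub hξ).subset ?_
  rintro _ ⟨h, rfl⟩
  exact Set.sub_mem_sub ⟨g⁻¹ * h, rfl⟩ ⟨h, rfl⟩

lemma eq_zero_of_add_const_of_finite_range {f : ℕ → ℝ} {c : ℝ}
    (hf : ∀ n, f (n + 1) = f n + c) (hfin : (Set.range f).Finite) : c = 0 := by
  have hlin : ∀ n : ℕ, f n = f 0 + n * c := by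
    intro n
    induction n with
    | zero => simp
    | succ n ih => rw [hf, ih]; push_cast; ring
  by_contra hc
  refine Set.infinite_range_of_injective (fun m n hmn => ?_) hfin
  rw [hlin m, hlin n] at hmn
  exact_mod_cast mul_right_cancel₀ hc (add_left_cancel hmn)

lemma apply_inv_eq_apply_one_of_lDiff_const {ξ : G → ℝ} (hξ : (Set.range ξ).Finite) {g : G}
    (hconst : ∀ h, lDiff g ξ h = lDiff g ξ 1) : ξ g⁻¹ = ξ 1 := by
  have hstep : ∀ n : ℕ, ξ (g⁻¹ ^ (n + 1)) = ξ (g⁻¹ ^ n) + lDiff g ξ 1 := by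
    intro n
    have := hconst (g⁻¹ ^ n)
    rw [lDiff, ← pow_succ'] at this
    linarith
  have hzero := eq_zero_of_add_const_of_finite_range hstep
    (hξ.subset (Set.range_comp_subset_range _ ξ))
  simpa [lDiff, sub_eq_zero] using hzero

lemma IsPolyLe.eq_apply_one_of_finite_range {d : ℕ} {ξ : G → ℝ} (hξ : IsPolyLe d ξ)
    (hfin : (Set.range ξ).Finite) (g : G) : ξ g = ξ 1 := by
  induction d generalizing ξ g with
  | zero =>
    rw [← inv_inv g]
    have hzero : lDiff g⁻¹ ξ = 0 := hξ [g⁻¹] rfl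
    exact apply_inv_eq_apply_one_of_lDiff_const hfin fun h => by rw [hzero]; rfl
  | succ d ih =>
    rw [← inv_inv g]
    exact apply_inv_eq_apply_one_of_lDiff_const hfin
      (ih (hξ.isPolyLe_lDiff g⁻¹) (finite_range_lDiff hfin g⁻¹) ·)

lemma mul_right_invariant_of_rDiff_eq_zero {T : Set G} {ξ : G → ℝ}
    (hT : ∀ t ∈ T, rDiff t ξ = 0) {s : G} (hs : s ∈ Subgroup.closure T) (h : G) :
    ξ (h * s) = ξ h := by
  induction hs using Subgroup.closure_induction generalizing h with
  | mem t ht => simpa [rDiff, sub_eq_zero] using congrFun (hT t ht) h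
  | one => rw [mul_one]
  | mul a b _ _ ha hb => rw [← mul_assoc, hb, ha]
  | inv a _ ha => rw [← ha (h * a⁻¹), inv_mul_cancel_right]

lemma finite_range_of_mul_right_invariant {H : Subgroup G} [H.FiniteIndex] {ξ : G → ℝ}
    (hξ : ∀ s ∈ H, ∀ h, ξ (h * s) = ξ h) : (Set.range ξ).Finite := by
  have : Finite (G ⧸ H) := H.finite_quotient_of_finiteIndex
  refine (Set.finite_range fun q : G ⧸ H => ξ q.out).subset ?_
  rintro _ ⟨h, rfl⟩
  refine ⟨h, ?_⟩
  have hmem : h⁻¹ * (h : G ⧸ H).out ∈ H :=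
    QuotientGroup.eq.mp (QuotientGroup.out_eq' (h : G ⧸ H)).symm
  simpa using hξ _ hmem h

end Group

theorem stmt10_general {G : Type*} [Group G]
    (T : Set G) (hT : (Subgroup.closure T).FiniteIndex)
    (ξ η : G → ℝ) (hξ : ∃ d : ℕ, IsPolyLe d ξ) (hη : ∃ d : ℕ, IsPolyLe d η)
    (h1 : ξ 1 = η 1) (hdiff : ∀ t ∈ T, rDiff t ξ = rDiff t η) : ξ = η := by
  obtain ⟨d₁, hξ⟩ := hξ
  obtain ⟨d₂, hη⟩ := hη
  have hpoly : IsPolyLe (max d₁ d₂) (ξ - η) :=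
    (hξ.mono (le_max_left _ _)).sub (hη.mono (le_max_right _ _))
  have hfin : (Set.range (ξ - η)).Finite :=
    finite_range_of_mul_right_invariant fun _ hs =>
      mul_right_invariant_of_rDiff_eq_zero
        (fun t ht => by rw [rDiff_sub, hdiff t ht, sub_self]) hs
  funext g
  simpa [h1, sub_eq_zero] using hpoly.eq_apply_one_of_finite_range hfin g

/-- On a finitely generated torsion-free nilpotent group `G`, two polynomial maps with
the same value at `1` and the same right differences `∂'_t` for all `t` in a subset `T`
generating a finite-index subgroup, are equal. -/
theorem stmt10 {G : Type*} [Group G] [Group.FG G] (hTF : Monoid.IsTorsionFree G)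
    [Group.IsNilpotent G] (T : Set G) (hT : (Subgroup.closure T).FiniteIndex)
    (ξ η : G → ℝ) (hξ : ∃ d : ℕ, IsPolyLe d ξ) (hη : ∃ d : ℕ, IsPolyLe d η)
    (h1 : ξ 1 = η 1) (hdiff : ∀ t ∈ T, rDiff t ξ = rDiff t η) : ξ = η :=
  stmt10_general T hT ξ η hξ hη h1 hdiff
end

section
/- Let G₁ and G₂ be finitely generated torsion-free nilpotent groups and d ∈ ℕ. Then Pol_d(G₁ × G₂) equals the ℝ-linear span of the functions (g₁, g₂) ↦ f₁(g₁)·f₂(g₂), where f₁ ∈ Pol_a(G₁), f₂ ∈ Pol_b(G₂) and a + b ≤ d. In particular each such product function lies in Pol_d(G₁ × G₂), and conversely every element of Pol_d(G₁ × G₂) is a finite ℝ-linear combination of such products. -/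
open Function Submodule

section Basic

variable {G : Type*} [Group G]

theorem lDiff_eq_zero_iff {g : G} {ξ : G → ℝ} : lDiff g ξ = 0 ↔ ∀ h, ξ (g⁻¹ * h) = ξ h := by
  simp [funext_iff, lDiff, sub_eq_zero]

theorem isPolyLe_zero_iff {ξ : G → ℝ} : IsPolyLe 0 ξ ↔ ∀ g, lDiff g ξ = 0 := by
  refine ⟨fun h g => h [g] rfl, ?_⟩
  rintro h (_ | ⟨g, _ | ⟨_, _⟩⟩) hlen
  · simp at hlen
  · exact h g
  · simp at hlen

theorem isPolyLe_zero_iff_eq_const {ξ : G → ℝ} : IsPolyLe 0 ξ ↔ ∀ x, ξ x = ξ 1 := by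
  simp only [isPolyLe_zero_iff, lDiff_eq_zero_iff]
  refine ⟨fun h x => by simpa using h x⁻¹ 1, fun h g x => by rw [h, h x]⟩

theorem isPolyLe_succ_iff {d : ℕ} {ξ : G → ℝ} :
    IsPolyLe (d + 1) ξ ↔ ∀ g, IsPolyLe d (lDiff g ξ) := by
  refine ⟨fun h g gs hlen => ?_, fun h gs hlen => ?_⟩
  · simpa using h (gs ++ [g]) (by simp [hlen])
  · rcases List.eq_nil_or_concat gs with rfl | ⟨gs, g, rfl⟩
    · simp at hlen
    · simpa using h g gs (by simpa using hlen)

theorem IsPolyLe.succ {d : ℕ} {ξ : G → ℝ} (h : IsPolyLe d ξ) : IsPolyLe (d + 1) ξ := by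
  rintro (_ | ⟨g, gs⟩) hlen
  · simp at hlen
  · simp [h gs (by simpa using hlen), lDiff_eq_zero_iff]

theorem IsPolyLe.mono_s11 {a d : ℕ} (had : a ≤ d) {ξ : G → ℝ} (h : IsPolyLe a ξ) : IsPolyLe d ξ := by
  induction d, had using Nat.le_induction with
  | base => exact h
  | succ d _ ih => exact ih.succ

theorem IsPolyLe.foldr_lDiff {k b : ℕ} {ξ : G → ℝ} (h : IsPolyLe (k + b) ξ) (gs : List G)
    (hgs : gs.length = k) : IsPolyLe b (gs.foldr lDiff ξ) := by
  induction gs generalizing k b with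
  | nil => simpa [← hgs] using h
  | cons g gs ih =>
    obtain ⟨k, rfl⟩ : ∃ k', k = k' + 1 := ⟨gs.length, by simpa using hgs.symm⟩
    have := ih (b := b + 1) (by rwa [← add_assoc, add_right_comm]) (by simpa using hgs)
    exact isPolyLe_succ_iff.1 this g

def lDiffₗ (g : G) : (G → ℝ) →ₗ[ℝ] G → ℝ where
  toFun := lDiff g
  map_add' ξ η := by funext h; simp only [lDiff, Pi.add_apply]; ring
  map_smul' c ξ := by
    funext h; simp only [lDiff, Pi.smul_apply, smul_eq_mul, RingHom.id_apply]; ring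

theorem foldr_lDiff_eq_prod (gs : List G) (ξ : G → ℝ) :
    gs.foldr lDiff ξ = (gs.map lDiffₗ).prod ξ := by
  induction gs with
  | nil => rfl
  | cons g gs ih => simp [ih, Module.End.mul_apply, lDiffₗ]

variable (G) in
def polyLe (d : ℕ) : Submodule ℝ (G → ℝ) where
  carrier := {ξ | IsPolyLe d ξ}
  zero_mem' gs _ := by simp [foldr_lDiff_eq_prod]
  add_mem' {ξ η} hξ hη gs hlen := by
    have := hξ gs hlen; have := hη gs hlen
    simp_all [foldr_lDiff_eq_prod]
  smul_mem' c ξ hξ gs hlen := by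
    have := hξ gs hlen
    simp_all [foldr_lDiff_eq_prod]

end Basic

section Pullback

variable {G H : Type*} [Group G] [Group H]

theorem foldr_lDiff_comp {φ ψ : G → H} (hφ : ∀ g x, φ (g⁻¹ * x) = (ψ g)⁻¹ * φ x)
    (ξ : H → ℝ) (gs : List G) : gs.foldr lDiff (ξ ∘ φ) = (gs.map ψ).foldr lDiff ξ ∘ φ := by
  induction gs with
  | nil => rfl
  | cons g gs ih => funext x; simp [ih, lDiff, hφ]

theorem IsPolyLe.comp {d : ℕ} {ξ : H → ℝ} (hξ : IsPolyLe d ξ) {φ : G → H} (ψ : G → H)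
    (hφ : ∀ g x, φ (g⁻¹ * x) = (ψ g)⁻¹ * φ x) : IsPolyLe d (ξ ∘ φ) := by
  intro gs hlen
  rw [foldr_lDiff_comp hφ, hξ _ (by simpa using hlen)]
  rfl

theorem IsPolyLe.comp_monoidHom {d : ℕ} {ξ : H → ℝ} (hξ : IsPolyLe d ξ) (φ : G →* H) :
    IsPolyLe d (ξ ∘ φ) :=
  hξ.comp φ fun g x => by simp

theorem IsPolyLe.comp_mul_left {d : ℕ} {ξ : G → ℝ} (hξ : IsPolyLe d ξ) (h : G) :
    IsPolyLe d fun x => ξ (h * x) :=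
  hξ.comp (fun g => h * g * h⁻¹) fun g x => by group

theorem IsPolyLe.curry {d : ℕ} {F : G × H → ℝ} (hF : IsPolyLe d F) (x : G) :
    IsPolyLe d (curry F x) :=
  hF.comp (fun y => (1, y)) fun y z => by simp

end Pullback

section Mul

variable {G : Type*} [Group G]

theorem lDiff_mul (g : G) (ξ η : G → ℝ) :
    lDiff g (ξ * η) = lDiff g ξ * (fun x => η (g⁻¹ * x)) + ξ * lDiff g η := by
  funext x; simp only [lDiff, Pi.mul_apply, Pi.add_apply]; ring

theorem IsPolyLe.mul {a b : ℕ} {ξ η : G → ℝ} (hξ : IsPolyLe a ξ) (hη : IsPolyLe b η) :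
    IsPolyLe (a + b) (ξ * η) := by
  induction a generalizing b ξ η with
  | zero =>
    have hconst : ξ * η = ξ 1 • η := by
      funext x; simp [isPolyLe_zero_iff_eq_const.1 hξ x]
    rw [hconst, zero_add]
    exact (polyLe G b).smul_mem (ξ 1) hη
  | succ a iha =>
    induction b generalizing η with
    | zero =>
      have hconst : ξ * η = η 1 • ξ := by
        funext x; simp [isPolyLe_zero_iff_eq_const.1 hη x, mul_comm]
      rw [hconst, add_zero]
      exact (polyLe G (a + 1)).smul_mem (η 1) hξ
    | succ b ihb =>
      rw [show a + 1 + (b + 1) = a + 1 + b + 1 by omega, isPolyLe_succ_iff]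
      intro g
      rw [lDiff_mul]
      have h₁ := iha (isPolyLe_succ_iff.1 hξ g) (hη.comp_mul_left g⁻¹)
      have h₂ := ihb (isPolyLe_succ_iff.1 hη g)
      rw [show a + (b + 1) = a + 1 + b by omega] at h₁
      exact (polyLe G _).add_mem h₁ h₂

end Mul

section FiniteDimensional

variable {G : Type*} [Group G]

theorem lDiff_eq_zero_of_mem_closure {S : Set G} {ξ : G → ℝ} (hS : ∀ s ∈ S, lDiff s ξ = 0)
    {g : G} (hg : g ∈ Subgroup.closure S) : lDiff g ξ = 0 := by
  induction hg using Subgroup.closure_induction with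
  | mem s hs => exact hS s hs
  | one => simp [lDiff_eq_zero_iff]
  | mul a b _ _ ha hb =>
    rw [lDiff_eq_zero_iff] at *
    intro h
    rw [mul_inv_rev, mul_assoc, hb, ha]
  | inv a _ ha =>
    rw [lDiff_eq_zero_iff] at *
    intro h
    rw [inv_inv, ← ha (a * h), inv_mul_cancel_left]

variable (G) in
theorem finiteDimensional_polyLe [Group.FG G] (d : ℕ) : FiniteDimensional ℝ (polyLe G d) := by
  obtain ⟨S, hS, hSfin⟩ := Group.fg_iff.1 ‹Group.FG G›
  have : Finite S := hSfin.to_subtype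
  induction d with
  | zero =>
    refine .of_injective ((LinearMap.proj 1).comp (polyLe G 0).subtype) fun ξ η hξη => ?_
    ext x
    rw [isPolyLe_zero_iff_eq_const.1 ξ.2 x, isPolyLe_zero_iff_eq_const.1 η.2 x]
    exact hξη
  | succ d ih =>
    -- `ξ` is determined by `ξ 1` and its differences along the generators
    let Φ : polyLe G (d + 1) →ₗ[ℝ] ℝ × (S → polyLe G d) :=
      ((LinearMap.proj 1).comp (polyLe G (d + 1)).subtype).prod <| LinearMap.pi fun s =>
        ((lDiffₗ (s : G)).comp (polyLe G (d + 1)).subtype).codRestrict (polyLe G d)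
          fun ξ => isPolyLe_succ_iff.1 ξ.2 s
    refine .of_injective Φ <| (injective_iff_map_eq_zero Φ).2 fun ξ hξ => ?_
    have h₁ : (ξ : G → ℝ) 1 = 0 := congrArg Prod.fst hξ
    have hgen : ∀ s ∈ S, lDiff s ξ = 0 := fun s hs =>
      congrArg Subtype.val (congrFun (congrArg Prod.snd hξ) ⟨s, hs⟩)
    have hconst : IsPolyLe 0 (ξ : G → ℝ) := isPolyLe_zero_iff.2 fun g =>
      lDiff_eq_zero_of_mem_closure hgen (hS ▸ Subgroup.mem_top g)
    ext x
    simpa [h₁] using isPolyLe_zero_iff_eq_const.1 hconst x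

end FiniteDimensional

theorem Submodule.exists_sub_sum_smul_mem {K V : Type*} [Field K] [AddCommGroup V] [Module K V]
    {A B : Submodule K V} (hAB : A ≤ B) [FiniteDimensional K B] :
    ∃ (n : ℕ) (e : Fin n → V) (Λ : Fin n → V →ₗ[K] K), (∀ j, e j ∈ B) ∧
      (∀ j, ∀ a ∈ A, Λ j a = 0) ∧ ∀ v ∈ B, v - ∑ j, Λ j v • e j ∈ A := by
  -- lift a basis of `B ⧸ A` to `B` and extend its coordinate functionals to `V`
  set A' := A.comap B.subtype
  let b := Module.finBasis K (B ⧸ A')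
  choose e he using fun j => A'.mkQ_surjective (b j)
  choose Λ hΛ using fun j => LinearMap.exists_extend ((b.coord j).comp A'.mkQ)
  have hΛB : ∀ j, ∀ v (hv : v ∈ B), Λ j v = b.coord j (A'.mkQ ⟨v, hv⟩) := fun j v hv =>
    LinearMap.congr_fun (hΛ j) ⟨v, hv⟩
  refine ⟨_, fun j => e j, Λ, fun j => (e j).2, fun j a ha => ?_, fun v hv => ?_⟩
  · have : A'.mkQ ⟨a, hAB ha⟩ = 0 := by rwa [← LinearMap.mem_ker, Submodule.ker_mkQ]
    rw [hΛB j a (hAB ha), this, map_zero]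
  · have hw : A'.mkQ (⟨v, hv⟩ - ∑ j, Λ j v • e j) = 0 := by
      simp only [map_sub, map_sum, map_smul, he, hΛB _ v hv, Module.Basis.coord_apply,
        b.sum_repr, sub_self]
    rw [← LinearMap.mem_ker, Submodule.ker_mkQ] at hw
    simpa [A'] using hw

section Product

variable {G₁ G₂ : Type*} [Group G₁] [Group G₂]

theorem foldr_lDiff_linearMap_curry (Λ : (G₂ → ℝ) →ₗ[ℝ] ℝ) (F : G₁ × G₂ → ℝ) (gs : List G₁) :
    gs.foldr lDiff (fun x => Λ (curry F x)) =
      fun x => Λ (curry ((gs.map fun g => (g, (1 : G₂))).foldr lDiff F) x) := by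
  induction gs with
  | nil => rfl
  | cons g gs ih =>
    funext x
    rw [List.foldr_cons, ih, List.map_cons, List.foldr_cons]
    simp only [lDiff, ← map_sub]
    congr 1
    funext y
    simp [curry, lDiff]

theorem IsPolyLe.linearMap_curry {k b : ℕ} {F : G₁ × G₂ → ℝ} (hF : IsPolyLe (k + 1 + b) F)
    (Λ : (G₂ → ℝ) →ₗ[ℝ] ℝ) (hΛ : ∀ η, IsPolyLe b η → Λ η = 0) :
    IsPolyLe k fun x => Λ (Function.curry F x) := by
  intro gs hlen
  rw [foldr_lDiff_linearMap_curry]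
  funext x
  exact hΛ _ ((hF.foldr_lDiff _ (by simpa using hlen)).curry x)

variable (G₁ G₂) in
def polyProducts (d : ℕ) : Set (G₁ × G₂ → ℝ) :=
  {F | ∃ (a b : ℕ) (f₁ : G₁ → ℝ) (f₂ : G₂ → ℝ), a + b ≤ d ∧ IsPolyLe a f₁ ∧ IsPolyLe b f₂ ∧
    F = fun p => f₁ p.1 * f₂ p.2}

theorem polyProducts_subset_polyLe (d : ℕ) :
    polyProducts G₁ G₂ d ⊆ polyLe (G₁ × G₂) d := by
  rintro _ ⟨a, b, f₁, f₂, hab, h₁, h₂, rfl⟩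
  exact ((h₁.comp_monoidHom (MonoidHom.fst G₁ G₂)).mul
    (h₂.comp_monoidHom (MonoidHom.snd G₁ G₂))).mono_s11 hab

theorem mem_span_polyProducts [Group.FG G₂] {d b : ℕ} (hb : b ≤ d) {F : G₁ × G₂ → ℝ}
    (hF : IsPolyLe d F) (hcurry : ∀ x, IsPolyLe b (curry F x)) :
    F ∈ span ℝ (polyProducts G₁ G₂ d) := by
  induction b generalizing F with
  | zero =>
    have hF₁ : IsPolyLe d fun x => F (x, 1) := hF.comp_monoidHom (MonoidHom.inl G₁ G₂)
    have hone : IsPolyLe 0 fun _ : G₂ => (1 : ℝ) := isPolyLe_zero_iff_eq_const.2 fun _ => rfl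
    refine subset_span ⟨d, 0, _, _, le_rfl, hF₁, hone, funext fun p => ?_⟩
    simpa using isPolyLe_zero_iff_eq_const.1 (hcurry p.1) p.2
  | succ b ih =>
    have := finiteDimensional_polyLe G₂ (b + 1)
    obtain ⟨n, e, Λ, he, hΛ, hrepr⟩ :=
      Submodule.exists_sub_sum_smul_mem (A := polyLe G₂ b) (B := polyLe G₂ (b + 1))
        fun η hη => IsPolyLe.succ hη
    let c : Fin n → G₁ → ℝ := fun j x => Λ j (curry F x)
    have hc : ∀ j, IsPolyLe (d - (b + 1)) (c j) := fun j =>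
      IsPolyLe.linearMap_curry (by rwa [show d - (b + 1) + 1 + b = d by omega]) (Λ j) (hΛ j)
    let T : G₁ × G₂ → ℝ := ∑ j, fun p => c j p.1 * e j p.2
    have hT : T ∈ span ℝ (polyProducts G₁ G₂ d) := sum_mem fun j _ =>
      subset_span ⟨d - (b + 1), b + 1, c j, e j, by omega, hc j, he j, rfl⟩
    have hFT : F - T ∈ span ℝ (polyProducts G₁ G₂ d) := by
      refine ih (by omega) ((polyLe _ d).sub_mem hF (span_le.2 (polyProducts_subset_polyLe d) hT))
        fun x => ?_
      have hcurryT : curry (F - T) x = curry F x - ∑ j, Λ j (curry F x) • e j := by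
        funext y
        simp [T, c, Finset.sum_apply]
      exact hcurryT ▸ hrepr (curry F x) (hcurry x)
    simpa using add_mem hFT hT

end Product

theorem stmt11_general {G₁ G₂ : Type*} [Group G₁] [Group G₂]
    [Group.FG G₂] (d : ℕ) :
    {F : G₁ × G₂ → ℝ | IsPolyLe d F} =
      (Submodule.span ℝ {F : G₁ × G₂ → ℝ |
        ∃ (a b : ℕ) (f₁ : G₁ → ℝ) (f₂ : G₂ → ℝ), a + b ≤ d ∧
          IsPolyLe a f₁ ∧ IsPolyLe b f₂ ∧
          F = fun p => f₁ p.1 * f₂ p.2} : Set (G₁ × G₂ → ℝ)) :=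
  Set.ext fun _ => ⟨fun hF => mem_span_polyProducts le_rfl hF hF.curry,
    fun hF => span_le.2 (polyProducts_subset_polyLe d) hF⟩

/-- For finitely generated torsion-free nilpotent groups `G₁, G₂`,
`Pol_d(G₁ × G₂)` is the `ℝ`-linear span of products `(g₁,g₂) ↦ f₁(g₁)·f₂(g₂)` with
`f₁ ∈ Pol_a(G₁)`, `f₂ ∈ Pol_b(G₂)` and `a + b ≤ d`. -/
theorem stmt11 {G₁ G₂ : Type*} [Group G₁] [Group G₂]
    [Group.FG G₁] (hTF₁ : Monoid.IsTorsionFree G₁) [Group.IsNilpotent G₁]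
    [Group.FG G₂] (hTF₂ : Monoid.IsTorsionFree G₂) [Group.IsNilpotent G₂]
    (d : ℕ) :
    {F : G₁ × G₂ → ℝ | IsPolyLe d F} =
      (Submodule.span ℝ {F : G₁ × G₂ → ℝ |
        ∃ (a b : ℕ) (f₁ : G₁ → ℝ) (f₂ : G₂ → ℝ), a + b ≤ d ∧
          IsPolyLe a f₁ ∧ IsPolyLe b f₂ ∧
          F = fun p => f₁ p.1 * f₂ p.2} : Set (G₁ × G₂ → ℝ)) :=
  stmt11_general d
end
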